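/- (Lemma 2.1) Let G be a finite simple graph, k ≥ 1, M a k-limited spanning subgraph of G with σ(M) ≠ 0, and P an M-augmenting trail in G. Then the spanning subgraph M' of G whose edge set is the symmetric difference E(M) Δ E(P) is again a k-limited spanning subgraph of G, and σ(M') = σ(M) − 2. -/

import Mathlib

open SimpleGraph

variable {V : Type*}

/-- The degree of a vertex `v` in a (sub)graph `M`. -/
noncomputable def mdeg (M : SimpleGraph V) (v : V) : ℕ := (M.neighborSet v).ncard

/-- `M` is a `k`-limited spanning subgraph of `G`: a subgraph on all the vertices of `G`
with all degrees at most `k`. -/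
def IsKLimitedSpanning (G M : SimpleGraph V) (k : ℕ) : Prop :=
  M ≤ G ∧ ∀ v : V, mdeg M v ≤ k

/-- `F` is a `k`-factor of `G`: a spanning subgraph all of whose degrees equal `k`. -/
def IsKFactor (G F : SimpleGraph V) (k : ℕ) : Prop :=
  F ≤ G ∧ ∀ v : V, mdeg F v = k

/-- The deficiency `σ(M) = ∑_{v} (k - deg_M v)`. -/
noncomputable def sigmaDef [Fintype V] (M : SimpleGraph V) (k : ℕ) : ℕ :=
  ∑ v : V, (k - mdeg M v)

/-- An `M`-alternating trail: a trail whose consecutive edges alternate between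
membership and non-membership in `E(M)`. -/
def IsAltTrail {G : SimpleGraph V} (M : SimpleGraph V) {u v : V} (p : G.Walk u v) : Prop :=
  p.IsTrail ∧ ∀ (i : ℕ) (h : i + 1 < p.edges.length),
    ((p.edges[i]'(Nat.lt_of_succ_lt h)) ∈ M.edgeSet ↔ (p.edges[i+1]'h) ∉ M.edgeSet)

/-- An `M`-augmenting trail (with respect to the bound `k`): an `M`-alternating trail whose
first and last edges are not in `E(M)`, whose endpoints are unfilled in `M`, all of whose
inner vertex visits are filled in `M`, and which, if closed at `v₀ = u = v`, additionally
satisfies `deg_M v₀ < k - 1`. -/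
def IsAugTrail (G M : SimpleGraph V) (k : ℕ) {u v : V} (p : G.Walk u v) : Prop :=
  IsAltTrail M p ∧
  p.edges ≠ [] ∧
  (∀ e, p.edges.head? = some e → e ∉ M.edgeSet) ∧
  (∀ e, p.edges.getLast? = some e → e ∉ M.edgeSet) ∧
  mdeg M u < k ∧ mdeg M v < k ∧
  (∀ w ∈ p.support.tail.dropLast, mdeg M w = k) ∧
  (u = v → mdeg M u < k - 1)

/-!
Toggle the edges of the trail in `M` one at a time. Toggling an edge changes the degree of each
of its endpoints by `+1` if the edge was outside `M` and by `-1` if it was inside. Along an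
alternating trail the two edges at every passage through a vertex have opposite signs, so all
changes cancel except those of the first and last edges, which lie outside `M`: the degree rises by
one at `u` and by one at `w` (by two if `u = w`). Unfilledness of the ends, and `deg_M u < k - 1`
for a closed trail, keep all degrees at most `k`, and the deficiency drops by exactly `2`.
-/

open scoped symmDiff Classical

noncomputable def edgeSign (M : SimpleGraph V) (e : Sym2 V) : ℤ :=
  if e ∈ M.edgeSet then -1 else 1

lemma mdeg_symmDiff_edge_of_ne (N : SimpleGraph V) {a b v : V} (hva : v ≠ a) (hvb : v ≠ b) :
    mdeg (fromEdgeSet (N.edgeSet ∆ {s(a, b)})) v = mdeg N v := by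
  unfold mdeg
  congr 1
  ext x
  have hx : s(v, x) ≠ s(a, b) := fun h => by
    rcases Sym2.eq_iff.mp h with ⟨h, -⟩ | ⟨h, -⟩ <;> contradiction
  simpa [Set.mem_symmDiff, hx] using fun h => h.ne

lemma mdeg_symmDiff_edge_left [Finite V] (N : SimpleGraph V) {a b : V} (hab : a ≠ b) :
    (mdeg (fromEdgeSet (N.edgeSet ∆ {s(a, b)})) a : ℤ) = mdeg N a + edgeSign N s(a, b) := by
  have hb (x : V) : s(a, x) = s(a, b) ↔ x = b := by simpa using fun h => absurd h hab
  unfold mdeg edgeSign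
  by_cases hadj : N.Adj a b
  · have hset : (fromEdgeSet (N.edgeSet ∆ {s(a, b)})).neighborSet a
        = N.neighborSet a \ {b} := by
      ext x
      simp only [mem_neighborSet, fromEdgeSet_adj, Set.mem_symmDiff, mem_edgeSet,
        Set.mem_singleton_iff, hb]
      aesop
    have hpos : 0 < (N.neighborSet a).ncard := (Set.ncard_pos).mpr ⟨b, hadj⟩
    rw [hset, Set.ncard_sdiff_singleton_of_mem (s := N.neighborSet a) hadj,
      if_pos (show s(a, b) ∈ N.edgeSet from hadj)]
    omega
  · have hset : (fromEdgeSet (N.edgeSet ∆ {s(a, b)})).neighborSet a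
        = insert b (N.neighborSet a) := by
      ext x
      simp only [mem_neighborSet, fromEdgeSet_adj, Set.mem_symmDiff, mem_edgeSet,
        Set.mem_singleton_iff, hb]
      aesop
    rw [hset, Set.ncard_insert_of_notMem (s := N.neighborSet a) hadj,
      if_neg (show s(a, b) ∉ N.edgeSet from hadj)]
    push_cast
    ring

lemma mdeg_symmDiff_edge [Finite V] (N : SimpleGraph V) {a b : V} (hab : a ≠ b) (v : V) :
    (mdeg (fromEdgeSet (N.edgeSet ∆ {s(a, b)})) v : ℤ)
      = mdeg N v + if v = a ∨ v = b then edgeSign N s(a, b) else 0 := by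
  by_cases hva : v = a
  · subst hva
    simp [mdeg_symmDiff_edge_left N hab]
  by_cases hvb : v = b
  · subst hvb
    simp only [or_true, if_true, Sym2.eq_swap (a := a)]
    exact mdeg_symmDiff_edge_left N (Ne.symm hab)
  simp [hva, hvb, mdeg_symmDiff_edge_of_ne N hva hvb]

lemma fromEdgeSet_symmDiff_insert (M : SimpleGraph V) {S : Set (Sym2 V)} {e : Sym2 V}
    (he : e ∉ S) :
    fromEdgeSet (M.edgeSet ∆ insert e S)
      = fromEdgeSet ((fromEdgeSet (M.edgeSet ∆ S)).edgeSet ∆ {e}) := by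
  ext a b
  simp only [fromEdgeSet_adj, Set.mem_symmDiff, Set.mem_insert_iff, edgeSet_fromEdgeSet,
    Set.mem_sdiff, Set.mem_singleton_iff, mem_edgeSet]
  by_cases h : s(a, b) = e
  · subst h
    tauto
  · tauto

lemma edgeSign_fromEdgeSet_symmDiff (M : SimpleGraph V) {S : Set (Sym2 V)} {a b : V}
    (hab : a ≠ b) (he : s(a, b) ∉ S) :
    edgeSign (fromEdgeSet (M.edgeSet ∆ S)) s(a, b) = edgeSign M s(a, b) := by
  simp [edgeSign, Set.mem_symmDiff, he, hab]

lemma SimpleGraph.Walk.mdeg_symmDiff_edges_of_alternating [Finite V] {G M : SimpleGraph V}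
    {u w : V} (p : G.Walk u w) (hp : p.edges.Nodup)
    (halt : p.edges.IsChain fun e f => e ∈ M.edgeSet ↔ f ∉ M.edgeSet)
    {e₀ e₁ : Sym2 V} (h₀ : p.edges.head? = some e₀) (h₁ : p.edges.getLast? = some e₁)
    (v : V) :
    (mdeg (fromEdgeSet (M.edgeSet ∆ {e | e ∈ p.edges})) v : ℤ)
      = mdeg M v + (if v = u then edgeSign M e₀ else 0)
        + (if v = w then edgeSign M e₁ else 0) := by
  induction p generalizing e₀ with
  | nil => simp at h₀
  | @cons u x w hux q ih =>
    rw [Walk.edges_cons] at hp halt h₀ h₁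
    obtain rfl : s(u, x) = e₀ := by simpa using h₀
    have hnotin : s(u, x) ∉ {e | e ∈ q.edges} := (List.nodup_cons.mp hp).1
    have hends : (if v = u ∨ v = x then edgeSign M s(u, x) else 0)
        = (if v = u then edgeSign M s(u, x) else 0)
          + (if v = x then edgeSign M s(u, x) else 0) := by
      rcases eq_or_ne v u with rfl | hvu
      · simp [hux.ne]
      · simp [hvu]
    rw [Walk.edges_cons, List.setOfPred_mem_cons, fromEdgeSet_symmDiff_insert M hnotin,
      mdeg_symmDiff_edge _ hux.ne, edgeSign_fromEdgeSet_symmDiff M hux.ne hnotin, hends]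
    rcases hq : q.edges with _ | ⟨f, l⟩
    · obtain rfl : x = w := q.eq_of_length_eq_zero (by rw [← Walk.length_edges, hq]; rfl)
      obtain rfl : s(u, x) = e₁ := by simpa [hq] using h₁
      simp only [List.not_mem_nil, Set.ofPred_false]
      rw [← Set.bot_eq_empty, symmDiff_bot, fromEdgeSet_edgeSet]
      ring
    · have hsign : edgeSign M f = -edgeSign M s(u, x) := by
        have := (List.isChain_cons_cons.mp (hq ▸ halt)).1
        unfold edgeSign
        split_ifs <;> simp_all
      rw [← hq, ih hp.of_cons halt.tail (by rw [hq]; rfl)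
        (by rwa [hq, List.getLast?_cons_cons, ← hq] at h₁), hsign]
      split_ifs <;> ring

lemma IsAltTrail.isChain_edges {G M : SimpleGraph V} {u w : V} {p : G.Walk u w}
    (h : IsAltTrail M p) : p.edges.IsChain fun e f => e ∈ M.edgeSet ↔ f ∉ M.edgeSet :=
  List.isChain_iff_getElem.mpr h.2

lemma SimpleGraph.Walk.fromEdgeSet_symmDiff_edges_le {G M : SimpleGraph V} (hM : M ≤ G)
    {u w : V} (p : G.Walk u w) : fromEdgeSet (M.edgeSet ∆ {e | e ∈ p.edges}) ≤ G := by
  intro a b hab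
  rcases Set.mem_symmDiff.mp ((fromEdgeSet_adj _).mp hab).1 with ⟨hm, -⟩ | ⟨hp, -⟩
  · exact hM hm
  · exact p.adj_of_mem_edges hp

lemma sigmaDef_eq_sum_sub [Fintype V] {M : SimpleGraph V} {k : ℕ} (h : ∀ v, mdeg M v ≤ k) :
    (sigmaDef M k : ℤ) = ∑ v, ((k : ℤ) - mdeg M v) := by
  unfold sigmaDef
  push_cast [Nat.cast_sub (h _)]
  rfl

theorem augment_step_general [Fintype V] (G M M' : SimpleGraph V) (k : ℕ)
    (hM : IsKLimitedSpanning G M k) {u w : V} (p : G.Walk u w)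
    (hP : IsAugTrail G M k p)
    (hM' : M' = SimpleGraph.fromEdgeSet (symmDiff M.edgeSet {e | e ∈ p.edges})) :
    IsKLimitedSpanning G M' k ∧ sigmaDef M' k = sigmaDef M k - 2 := by
  obtain ⟨halt, hne, hhead, hlast, hu, hw, -, hclosed⟩ := hP
  have hdeg (v : V) : (mdeg M' v : ℤ)
      = mdeg M v + (if v = u then 1 else 0) + (if v = w then 1 else 0) := by
    have h₀ := List.head?_eq_some_head hne
    have h₁ := List.getLast?_eq_some_getLast hne
    rw [hM', p.mdeg_symmDiff_edges_of_alternating halt.1.edges_nodup halt.isChain_edges h₀ h₁,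
      edgeSign, edgeSign, if_neg (hhead _ h₀), if_neg (hlast _ h₁)]
  have hle (v : V) : mdeg M' v ≤ k := by
    have hv := hdeg v
    rcases eq_or_ne v u with rfl | hvu <;> rcases eq_or_ne v w with rfl | hvw
    · have := hclosed rfl
      simp only [if_true] at hv
      omega
    · simp only [if_true, hvw, if_false] at hv
      omega
    · simp only [if_true, hvu, if_false] at hv
      omega
    · have := hM.2 v
      simp only [hvu, hvw, if_false] at hv
      omega
  refine ⟨⟨hM' ▸ p.fromEdgeSet_symmDiff_edges_le hM.1, hle⟩, ?_⟩
  have hsum : (sigmaDef M' k : ℤ) = sigmaDef M k - 2 := by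
    simp only [sigmaDef_eq_sum_sub hle, sigmaDef_eq_sum_sub hM.2, hdeg, sub_add_eq_sub_sub,
      Finset.sum_sub_distrib, Finset.sum_ite_eq', Finset.mem_univ, if_true]
    ring
  omega

/-- Lemma 2.1: If `M` is a `k`-limited spanning subgraph with `σ(M) ≠ 0` and
`P` is an `M`-augmenting trail, then `M' = M Δ P` is again a `k`-limited spanning subgraph
of `G` and `σ(M') = σ(M) − 2`. -/
theorem augment_step [Fintype V] (G M M' : SimpleGraph V) (k : ℕ) (hk : 1 ≤ k)
    (hM : IsKLimitedSpanning G M k) (hσ : sigmaDef M k ≠ 0) {u w : V} (p : G.Walk u w)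
    (hP : IsAugTrail G M k p)
    (hM' : M' = SimpleGraph.fromEdgeSet (symmDiff M.edgeSet {e | e ∈ p.edges})) :
    IsKLimitedSpanning G M' k ∧ sigmaDef M' k = sigmaDef M k - 2 :=
  augment_step_general G M M' k hM p hP hM'
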